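/- There exist real numbers r1, r2 with 0 < r1 < r2 < 1/6 such that for every δ∈(0,1/6): g(δ) > f(δ) if and only if δ∈(0,r1)∪(r2,1/6) (and g(δ) < f(δ) for δ∈(r1,r2)). (Numerically r1 ≈ 0.0563 and r2 ≈ 0.134.) -/

import Mathlib

open Classical Finset

noncomputable section

def nbr {V : Type} [Fintype V] (G : SimpleGraph V) (S : Finset V) : Finset V :=
  Finset.univ.filter fun j => ∃ i ∈ S, G.Adj i j

def aSum {V : Type} (α : V → ℝ) (S : Finset V) : ℝ := ∑ i ∈ S, α i

def IsIndep {V : Type} (G : SimpleGraph V) (I : Finset V) : Prop :=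
  I.Nonempty ∧ ∀ i ∈ I, ∀ j ∈ I, ¬ G.Adj i j

def indepSets {V : Type} [Fintype V] (G : SimpleGraph V) : Finset (Finset V) :=
  Finset.univ.filter fun I => IsIndep G I

def Ncond {V : Type} [Fintype V] (G : SimpleGraph V) (α : V → ℝ) : Prop :=
  ∀ I ∈ indepSets G, aSum α I < aSum α (nbr G I)

def Tlist {V : Type} [Fintype V] [DecidableEq V] (G : SimpleGraph V) (α : V → ℝ) :
    List V → Finset V → ℝ
  | [], _ => 1
  | i :: l, P =>
      α i / (aSum α (nbr G (insert i P)) - aSum α (insert i P)) * Tlist G α l (insert i P)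

def Erat {V : Type} [Fintype V] [DecidableEq V] (G : SimpleGraph V) (α : V → ℝ) :
    List V → Finset V → ℝ
  | [], _ => 0
  | i :: l, P =>
      aSum α (nbr G (insert i P)) / (aSum α (nbr G (insert i P)) - aSum α (insert i P)) +
        Erat G α l (insert i P)

def TI {V : Type} [Fintype V] [DecidableEq V] (G : SimpleGraph V) (α : V → ℝ) (I : Finset V) : ℝ :=
  ∑ l ∈ I.toList.permutations.toFinset, Tlist G α l ∅

def EI {V : Type} [Fintype V] [DecidableEq V] (G : SimpleGraph V) (α : V → ℝ) (I : Finset V) : ℝ :=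
  ∑ l ∈ I.toList.permutations.toFinset, Erat G α l ∅ * Tlist G α l ∅

def meanQ {V : Type} [Fintype V] [DecidableEq V] (G : SimpleGraph V) (α : V → ℝ) : ℝ :=
  (1 + ∑ I ∈ indepSets G, TI G α I)⁻¹ * ∑ I ∈ indepSets G, EI G α I

def IsWord {V : Type} (G : SimpleGraph V) (w : List V) : Prop :=
  w.Pairwise fun a b => ¬ G.Adj a b

def piHatAux {V : Type} [Fintype V] [DecidableEq V] (G : SimpleGraph V) (α : V → ℝ) :
    List V → Finset V → ℝ
  | [], _ => 1
  | i :: l, P => α i / aSum α (nbr G (insert i P)) * piHatAux G α l (insert i P)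

def piHat {V : Type} [Fintype V] [DecidableEq V] (G : SimpleGraph V) (α : V → ℝ) (w : List V) : ℝ :=
  piHatAux G α w ∅

def addEdge {V : Type} (G : SimpleGraph V) (u v : V) : SimpleGraph V :=
  G ⊔ SimpleGraph.fromEdgeSet {s(u, v)}

end

noncomputable def fQ (x : ℝ) : ℝ :=
  ((1/2 - 2*x) * (1/2 + 2*x) / (4*x)^2 + (1/2 - x) * (1/2 + x) / (2*x)^2
      + 3*x*(1 - 3*x) / (1 - 6*x)^2) /
    (1 + (1/2 - 2*x)/(4*x) + (1/2 - x)/(2*x) + 3*x/(1 - 6*x))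

noncomputable def gQ (x : ℝ) : ℝ :=
  (2 * ((1/4 - x) * (3/4 + x)) / (1/2 + 2*x)^2 + (1/2 - x) * (1/2 + x) / (2*x)^2
      + 3*x*(1 - 3*x) / (1 - 6*x)^2) /
    (1 + 2*(1/4 - x)/(1/2 + 2*x) + (1/2 - x)/(2*x) + 3*x/(1 - 6*x))

/-! Over a common denominator, `gQ - fQ = braessNum / braessDen`, where `braessDen > 0` on
`(0, 1/6)`. The quintic `braessNum` is strictly convex on `[0, 1/6]`: its second divided
differences form a cubic in the nodes that stays positive there. Since `braessNum` is positive at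
`1/20` and `3/20` and negative at `1/10`, it has two roots `r1 < r2` in `(0, 1/6)`, and convexity
makes it negative between them and positive outside. -/

theorem StrictConvexOn.sign_of_zeros {𝕜 : Type*} [Field 𝕜] [LinearOrder 𝕜]
    [IsStrictOrderedRing 𝕜] {s : Set 𝕜} {f : 𝕜 → 𝕜} (hf : StrictConvexOn 𝕜 s f)
    {r₁ r₂ x : 𝕜} (hr₁ : r₁ ∈ s) (hr₂ : r₂ ∈ s) (hr : r₁ < r₂) (hf₁ : f r₁ = 0)
    (hf₂ : f r₂ = 0) (hx : x ∈ s) :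
    (0 < f x ↔ x < r₁ ∨ r₂ < x) ∧ (r₁ < x → x < r₂ → f x < 0) := by
  have hmid : r₁ < x → x < r₂ → f x < 0 := fun h₁ h₂ => by
    have slope := hf.slope_strict_mono_adjacent hr₁ hr₂ h₁ h₂
    rw [hf₁, hf₂, sub_zero, zero_sub] at slope
    by_contra! hfx
    have hright := div_nonpos_of_nonpos_of_nonneg (neg_nonpos.2 hfx) (sub_pos.2 h₂).le
    exact slope.not_ge (hright.trans (div_nonneg hfx (sub_pos.2 h₁).le))
  refine ⟨⟨fun hpos => ?_, ?_⟩, hmid⟩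
  · by_contra! hx'
    rcases hx'.1.eq_or_lt with rfl | h₁
    · exact hpos.ne' hf₁
    rcases hx'.2.eq_or_lt with rfl | h₂
    · exact hpos.ne' hf₂
    exact (hmid h₁ h₂).not_gt hpos
  · rintro (h | h)
    · have slope := hf.slope_strict_mono_adjacent hx hr₂ h hr
      rw [hf₁, hf₂, sub_self, zero_div, zero_sub, neg_div, neg_lt_zero] at slope
      exact (div_pos_iff_of_pos_right (sub_pos.2 h)).1 slope
    · have slope := hf.slope_strict_mono_adjacent hr₁ hx hr h
      rw [hf₁, hf₂, sub_self, zero_div, sub_zero] at slope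
      exact (div_pos_iff_of_pos_right (sub_pos.2 h)).1 slope

def braessNum (x : ℝ) : ℝ := 1 - 26*x + 152*x^2 - 112*x^3 + 384*x^4 - 2304*x^5

def braessDen (x : ℝ) : ℝ := 24*x*(2*x - 1)*(4*x + 1)*(24*x^2 - 8*x - 1)

theorem braessDen_pos {x : ℝ} (h₀ : 0 < x) (h₁ : x < 1/6) : 0 < braessDen x := by
  have hquad : 24*x^2 - 8*x - 1 < 0 := by nlinarith
  have hneg : 0 < (2*x - 1) * (24*x^2 - 8*x - 1) := mul_pos_of_neg_of_neg (by linarith) hquad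
  have e : braessDen x = 24*x*(4*x + 1) * ((2*x - 1) * (24*x^2 - 8*x - 1)) := by
    unfold braessDen; ring
  rw [e]
  positivity

theorem gQ_sub_fQ {x : ℝ} (h₀ : 0 < x) (h₁ : x < 1/6) :
    gQ x - fQ x = braessNum x / braessDen x := by
  have h6 : 0 < 1 - 6*x := by linarith
  have hf : 0 < 1 + (1/2 - 2*x)/(4*x) + (1/2 - x)/(2*x) + 3*x/(1 - 6*x) := by
    have : 0 ≤ (1/2 - 2*x)/(4*x) := div_nonneg (by linarith) (by linarith)
    have : 0 ≤ (1/2 - x)/(2*x) := div_nonneg (by linarith) (by linarith)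
    have : 0 ≤ 3*x/(1 - 6*x) := div_nonneg (by linarith) h6.le
    linarith
  have hg : 0 < 1 + 2*(1/4 - x)/(1/2 + 2*x) + (1/2 - x)/(2*x) + 3*x/(1 - 6*x) := by
    have : 0 ≤ 2*(1/4 - x)/(1/2 + 2*x) := div_nonneg (by linarith) (by linarith)
    have : 0 ≤ (1/2 - x)/(2*x) := div_nonneg (by linarith) (by linarith)
    have : 0 ≤ 3*x/(1 - 6*x) := div_nonneg (by linarith) h6.le
    linarith
  have h6' : 1 - x*6 ≠ 0 := by linarith
  unfold fQ gQ
  rw [div_sub_div _ _ hg.ne' hf.ne', div_eq_div_iff (by positivity) (braessDen_pos h₀ h₁).ne']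
  unfold braessNum braessDen
  field_simp
  ring

theorem strictConvexOn_braessNum : StrictConvexOn ℝ (Set.Icc 0 (1/6)) braessNum := by
  refine strictConvexOn_of_slope_strict_mono_adjacent (convex_Icc _ _) ?_
  rintro a b c ⟨ha, -⟩ ⟨-, hc6⟩ hab hbc
  have hb : 0 ≤ b := by linarith
  have hc : 0 ≤ c := by linarith
  have ha6 : a ≤ 1/6 := by linarith
  have hb6 : b ≤ 1/6 := by linarith
  -- the second divided difference `[a, b, c]` of `braessNum`, namely `∑ₖ cₖ hₖ₋₂(a, b, c)` for
  -- the coefficients `cₖ` and the complete homogeneous symmetric polynomials `hⱼ`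
  have hdd : 0 < 152 - 112*(a+b+c) + 384*(a^2+b^2+c^2+a*b+a*c+b*c)
      - 2304*(a^3+b^3+c^3+a^2*b+a^2*c+b^2*a+b^2*c+c^2*a+c^2*b+a*b*c) := by
    nlinarith [mul_nonneg (mul_nonneg ha hb) hc, sq_nonneg (a+b+c),
      mul_nonneg (sub_nonneg.2 ha6) (sq_nonneg (a+b+c)),
      mul_nonneg (sub_nonneg.2 hb6) (sq_nonneg (a+b+c)),
      mul_nonneg (sub_nonneg.2 hc6) (sq_nonneg (a+b+c))]
  have hslope : (braessNum c - braessNum b) / (c - b) - (braessNum b - braessNum a) / (b - a)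
      = (c - a) * (152 - 112*(a+b+c) + 384*(a^2+b^2+c^2+a*b+a*c+b*c)
      - 2304*(a^3+b^3+c^3+a^2*b+a^2*c+b^2*a+b^2*c+c^2*a+c^2*b+a*b*c)) := by
    rw [div_sub_div _ _ (sub_pos.2 hbc).ne' (sub_pos.2 hab).ne', div_eq_iff (by nlinarith)]
    unfold braessNum
    ring
  have := mul_pos (sub_pos.2 (hab.trans hbc)) hdd
  linarith

theorem exists_braessNum_roots :
    ∃ r₁ r₂ : ℝ, 0 < r₁ ∧ r₁ < r₂ ∧ r₂ < 1/6 ∧ braessNum r₁ = 0 ∧ braessNum r₂ = 0 := by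
  have hcont : Continuous braessNum := by unfold braessNum; fun_prop
  have hsign₁ : (0 : ℝ) ∈ Set.Ioo (braessNum (1/10)) (braessNum (1/20)) := by norm_num [braessNum]
  have hsign₂ : (0 : ℝ) ∈ Set.Ioo (braessNum (1/10)) (braessNum (3/20)) := by norm_num [braessNum]
  obtain ⟨r₁, ⟨h₁, h₁'⟩, hr₁⟩ :=
    intermediate_value_Ioo' (by norm_num : (1/20 : ℝ) ≤ 1/10) hcont.continuousOn hsign₁
  obtain ⟨r₂, ⟨h₂, h₂'⟩, hr₂⟩ :=
    intermediate_value_Ioo (by norm_num : (1/10 : ℝ) ≤ 3/20) hcont.continuousOn hsign₂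
  exact ⟨r₁, r₂, by linarith, h₁'.trans h₂, by linarith, hr₁, hr₂⟩

theorem stmt4 :
    ∃ r1 r2 : ℝ, 0 < r1 ∧ r1 < r2 ∧ r2 < 1/6 ∧
      ∀ δ ∈ Set.Ioo (0:ℝ) (1/6),
        (gQ δ > fQ δ ↔ δ ∈ Set.Ioo (0:ℝ) r1 ∪ Set.Ioo r2 (1/6)) ∧
        (δ ∈ Set.Ioo r1 r2 → gQ δ < fQ δ) := by
  obtain ⟨r1, r2, h₁, h₁₂, h₂, hr₁, hr₂⟩ := exists_braessNum_roots
  refine ⟨r1, r2, h₁, h₁₂, h₂, fun δ ⟨hδ₀, hδ₁⟩ => ?_⟩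
  have mem : ∀ {y : ℝ}, 0 < y → y < 1/6 → y ∈ Set.Icc (0 : ℝ) (1/6) := fun h h' => ⟨h.le, h'.le⟩
  obtain ⟨hpos, hneg⟩ := strictConvexOn_braessNum.sign_of_zeros (mem h₁ (h₁₂.trans h₂))
    (mem (h₁.trans h₁₂) h₂) h₁₂ hr₁ hr₂ (mem hδ₀ hδ₁)
  have hdiff := gQ_sub_fQ hδ₀ hδ₁
  have hden := braessDen_pos hδ₀ hδ₁
  constructor
  · rw [gt_iff_lt, ← sub_pos, hdiff, div_pos_iff_of_pos_right hden, hpos]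
    simp only [Set.mem_union, Set.mem_Ioo, hδ₀, hδ₁, true_and, and_true]
  · rintro ⟨h, h'⟩
    rw [← sub_neg, hdiff]
    exact div_neg_of_neg_of_pos (hneg h h') hden
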